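/- arXiv:1604.07456 — 6 statements merged into one kernel-verified Lean document; each statement's English description precedes it below -/
import Mathlib

section
/- Overtaking rule for trains: for all indices 1 ≤ d < c ≤ k and a, b with d ≤ a ≤ c−1 and d ≤ b ≤ c−1 (i.e. a, b ∈ [d, c)) one has T_{a↗b} · T_{c↗d} = T_{c↗d} · T_{a′↗b′} in G, where a′ = σ_{d,c}(a) = a+1 and b′ = σ_{d,c}(b) = b+1. -/
noncomputable section

variable {G : Type*} [Group G]

/-- `ascProd T a n = T_a * T_{a+1} * ⋯ * T_{a+n-1}` (`n` factors, ascending). -/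
def ascProd (T : ℕ → G) (a : ℕ) : ℕ → G
  | 0 => 1
  | n + 1 => ascProd T a n * T (a + n)

/-- `descProd T b n = T_{b+n-1} * ⋯ * T_b` (`n` factors, descending). -/
def descProd (T : ℕ → G) (b : ℕ) : ℕ → G
  | 0 => 1
  | n + 1 => T (b + n) * descProd T b n

/-- The ascending train `T_{a↗b}`: for `a ≤ b` it is `T_a T_{a+1} ⋯ T_{b-1}`;
for `a > b` it is, by convention, `T*_{a↘b} = T_{a-1}⁻¹ ⋯ T_b⁻¹`. -/
def up (T : ℕ → G) (a b : ℕ) : G :=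
  if a ≤ b then ascProd T a (b - a) else (ascProd T b (a - b))⁻¹

/-- The descending train `T_{a↘b}`: for `a ≥ b` it is `T_{a-1} T_{a-2} ⋯ T_b`;
for `a < b` it is, by convention, `T*_{a↗b} = T_a⁻¹ ⋯ T_{b-1}⁻¹`. -/
def down (T : ℕ → G) (a b : ℕ) : G :=
  if b ≤ a then descProd T b (a - b) else (descProd T a (b - a))⁻¹

/-- The starred ascending train `T*_{a↗b} = T_a⁻¹ ⋯ T_{b-1}⁻¹` (for `a ≤ b`),
with the analogous convention for `a > b`. -/
def upStar (T : ℕ → G) (a b : ℕ) : G := up (fun n => (T n)⁻¹) a b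

/-- The starred descending train `T*_{a↘b} = T_{a-1}⁻¹ ⋯ T_b⁻¹` (for `a ≥ b`),
with the analogous convention for `a < b`. -/
def downStar (T : ℕ → G) (a b : ℕ) : G := down (fun n => (T n)⁻¹) a b

/-- `σ_{a,b}(c) = c+1` if `a ≤ c < b`, `c−1` if `a ≥ c > b`, and `c` otherwise. -/
def sigmaShift (a b c : ℕ) : ℕ :=
  if a ≤ c ∧ c < b then c + 1 else if b < c ∧ c ≤ a then c - 1 else c

lemma ascProd_add (T : ℕ → G) (a m : ℕ) :
    ∀ n, ascProd T a (m + n) = ascProd T a m * ascProd T (a + m) n := by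
  intro n
  induction n with
  | zero => simp [ascProd]
  | succ n ih =>
      have h0 : ascProd T a (m + (n + 1)) =
          ascProd T a (m + n) * T (a + (m + n)) := by
        rw [show m + (n + 1) = (m + n) + 1 by omega]; rfl
      rw [h0, ih, show a + (m + n) = a + m + n by omega, mul_assoc]
      rfl

lemma key_shift (T : ℕ → G) (P : G) (a : ℕ) :
    ∀ n, (∀ t, t < n → P * T (a + t) = T (a + t + 1) * P) →
      P * ascProd T a n = ascProd T (a + 1) n * P := by
  intro n
  induction n with
  | zero => intro _; simp [ascProd]
  | succ n ih =>
      intro h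
      have h1 := h n (by omega)
      calc P * ascProd T a (n + 1) = (P * ascProd T a n) * T (a + n) := by
            rw [ascProd]; group
        _ = ascProd T (a + 1) n * (P * T (a + n)) := by
            rw [ih (fun t ht => h t (by omega))]; group
        _ = ascProd T (a + 1) n * T (a + 1 + n) * P := by
            rw [h1, show a + n + 1 = a + 1 + n by omega]; group
        _ = ascProd T (a + 1) (n + 1) * P := by rw [ascProd]

lemma comm_ascProd (T : ℕ → G) (X : G) (a : ℕ) :
    ∀ n, (∀ t, t < n → X * T (a + t) = T (a + t) * X) →
      X * ascProd T a n = ascProd T a n * X := by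
  intro n
  induction n with
  | zero => intro _; simp [ascProd]
  | succ n ih =>
      intro h
      rw [ascProd, ← mul_assoc, ih (fun t ht => h t (by omega)), mul_assoc,
        h n (by omega), ← mul_assoc]

lemma conj_one (k : ℕ) (T : ℕ → G)
    (hbraid : ∀ i, 1 ≤ i → i + 2 ≤ k →
      T i * T (i + 1) * T i = T (i + 1) * T i * T (i + 1))
    (hcomm : ∀ i j, 1 ≤ i → i + 1 ≤ k → 1 ≤ j → j + 1 ≤ k →
      (i + 1 < j ∨ j + 1 < i) → T i * T j = T j * T i)
    (c d : ℕ) (hd : 1 ≤ d) (hdc : d < c) (hck : c ≤ k) :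
    ∀ i, d ≤ i → i + 2 ≤ c →
      ascProd T d (c - d) * T i = T (i + 1) * ascProd T d (c - d) := by
  intro i hdi hic
  have hsplit : c - d = (i - d) + 2 + (c - (i + 2)) := by omega
  set A := ascProd T d (i - d) with hA
  set B := ascProd T (i + 2) (c - (i + 2)) with hB
  have hP : ascProd T d (c - d) = A * (T i * T (i + 1)) * B := by
    have h2 : ascProd T i 2 = T i * T (i + 1) := by
      show (ascProd T i 0 * T (i + 0)) * T (i + 1) = _
      simp [ascProd]
    rw [hsplit, ascProd_add, ascProd_add, show d + (i - d) = i by omega,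
      show d + ((i - d) + 2) = i + 2 by omega, h2]
  have hBi : T i * B = B * T i := by
    apply comm_ascProd
    intro t ht
    exact hcomm i (i + 2 + t) (by omega) (by omega) (by omega) (by omega)
      (by omega)
  have hAi : T (i + 1) * A = A * T (i + 1) := by
    apply comm_ascProd
    intro t ht
    exact hcomm (i + 1) (d + t) (by omega) (by omega) (by omega) (by omega)
      (by omega)
  have hbr := hbraid i (by omega) (by omega)
  calc ascProd T d (c - d) * T i = A * (T i * T (i + 1)) * (B * T i) := by
        rw [hP]; group
    _ = A * (T i * T (i + 1) * T i) * B := by rw [← hBi]; group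
    _ = A * (T (i + 1) * T i * T (i + 1)) * B := by rw [hbr]
    _ = (A * T (i + 1)) * (T i * T (i + 1)) * B := by group
    _ = T (i + 1) * ascProd T d (c - d) := by rw [← hAi, hP]; group

/-- Overtaking rule for trains: for `d < c` and `a, b ∈ [d, c)` one has
`T_{a↗b} · T_{c↗d} = T_{c↗d} · T_{a′↗b′}` where `a′ = σ_{d,c}(a) = a+1` and
`b′ = σ_{d,c}(b) = b+1`. -/
theorem train_overtaking (k : ℕ) (T : ℕ → G)
    (hbraid : ∀ i, 1 ≤ i → i + 2 ≤ k →
      T i * T (i + 1) * T i = T (i + 1) * T i * T (i + 1))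
    (hcomm : ∀ i j, 1 ≤ i → i + 1 ≤ k → 1 ≤ j → j + 1 ≤ k →
      (i + 1 < j ∨ j + 1 < i) → T i * T j = T j * T i) :
    ∀ a b c d, 1 ≤ d → d < c → c ≤ k → d ≤ a → a ≤ c - 1 → d ≤ b → b ≤ c - 1 →
      up T a b * up T c d = up T c d * up T (sigmaShift d c a) (sigmaShift d c b) ∧
        sigmaShift d c a = a + 1 ∧ sigmaShift d c b = b + 1 := by
  intro a b c d hd hdc hck hda hac hdb hbc
  have hsa : sigmaShift d c a = a + 1 := by
    rw [sigmaShift, if_pos ⟨hda, by omega⟩]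
  have hsb : sigmaShift d c b = b + 1 := by
    rw [sigmaShift, if_pos ⟨hdb, by omega⟩]
  refine ⟨?_, hsa, hsb⟩
  rw [hsa, hsb]
  set P := ascProd T d (c - d) with hPdef
  have hucd : up T c d = P⁻¹ := by rw [up, if_neg (by omega)]
  have conj := conj_one k T hbraid hcomm c d hd hdc hck
  rw [hucd]
  by_cases hab : a ≤ b
  · have h1 : up T a b = ascProd T a (b - a) := by rw [up, if_pos hab]
    have h2 : up T (a + 1) (b + 1) = ascProd T (a + 1) (b - a) := by
      rw [up, if_pos (by omega), show b + 1 - (a + 1) = b - a by omega]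
    have key : P * ascProd T a (b - a) = ascProd T (a + 1) (b - a) * P := by
      apply key_shift
      intro t ht
      exact conj (a + t) (by omega) (by omega)
    rw [h1, h2]
    calc ascProd T a (b - a) * P⁻¹
        = P⁻¹ * (P * ascProd T a (b - a)) * P⁻¹ := by group
      _ = P⁻¹ * (ascProd T (a + 1) (b - a) * P) * P⁻¹ := by rw [key]
      _ = P⁻¹ * ascProd T (a + 1) (b - a) := by group
  · have h1 : up T a b = (ascProd T b (a - b))⁻¹ := by rw [up, if_neg hab]
    have h2 : up T (a + 1) (b + 1) = (ascProd T (b + 1) (a - b))⁻¹ := by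
      rw [up, if_neg (by omega), show a + 1 - (b + 1) = a - b by omega]
    have key : P * ascProd T b (a - b) = ascProd T (b + 1) (a - b) * P := by
      apply key_shift
      intro t ht
      exact conj (b + t) (by omega) (by omega)
    rw [h1, h2]
    calc (ascProd T b (a - b))⁻¹ * P⁻¹ = (P * ascProd T b (a - b))⁻¹ := by group
      _ = (ascProd T (b + 1) (a - b) * P)⁻¹ := by rw [key]
      _ = P⁻¹ * (ascProd T (b + 1) (a - b))⁻¹ := by group
end
end

section
/- T–z rule: suppose G additionally contains elements z_1,…,z_k satisfying z_i T_j = T_j z_i whenever i ∉ {j, j+1} and z_{i+1} = T_i z_i T_i for 1 ≤ i ≤ k−1. Then for all 1 ≤ a, b ≤ k one has T_{a↘b} · z_b = z_a · T_{a↗b} in G. -/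
noncomputable section

variable {G : Type*} [Group G]

lemma key_z (k : ℕ) (T z : ℕ → G)
    (hz : ∀ i, 1 ≤ i → i + 1 ≤ k → z (i + 1) = T i * z i * T i) :
    ∀ a n, 1 ≤ a → a + n ≤ k → z (a + n) = descProd T a n * z a * ascProd T a n := by
  intro a n
  induction n with
  | zero => intro _ _; simp [descProd, ascProd]
  | succ n ih =>
    intro ha hk
    have h1 : z (a + n + 1) = T (a + n) * z (a + n) * T (a + n) :=
      hz (a + n) (by omega) (by omega)
    rw [show a + (n + 1) = a + n + 1 by omega, h1, ih ha (by omega)]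
    simp [descProd, ascProd, mul_assoc]

/-- T–z rule: if `z_1,…,z_k` satisfy `z_i T_j = T_j z_i` for `i ∉ {j, j+1}` and
`z_{i+1} = T_i z_i T_i`, then `T_{a↘b} · z_b = z_a · T_{a↗b}`. -/
theorem train_z_rule (k : ℕ) (T z : ℕ → G)
    (hbraid : ∀ i, 1 ≤ i → i + 2 ≤ k →
      T i * T (i + 1) * T i = T (i + 1) * T i * T (i + 1))
    (hcomm : ∀ i j, 1 ≤ i → i + 1 ≤ k → 1 ≤ j → j + 1 ≤ k →
      (i + 1 < j ∨ j + 1 < i) → T i * T j = T j * T i)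
    (hzT : ∀ i j, 1 ≤ i → i ≤ k → 1 ≤ j → j + 1 ≤ k → i ≠ j → i ≠ j + 1 →
      z i * T j = T j * z i)
    (hz : ∀ i, 1 ≤ i → i + 1 ≤ k → z (i + 1) = T i * z i * T i) :
    ∀ a b, 1 ≤ a → a ≤ k → 1 ≤ b → b ≤ k →
      down T a b * z b = z a * up T a b := by
  intro a b ha hak hb hbk
  by_cases h : b ≤ a
  · have hkey := key_z k T z hz b (a - b) hb (by omega)
    rw [show b + (a - b) = a by omega] at hkey
    have hup : up T a b = (ascProd T b (a - b))⁻¹ := by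
      unfold up
      split_ifs with h'
      · have : a = b := by omega
        subst this
        simp [ascProd]
      · rfl
    rw [hup, down, if_pos h, hkey]
    group
  · have hkey := key_z k T z hz a (b - a) ha (by omega)
    rw [show a + (b - a) = b by omega] at hkey
    rw [down, if_neg h, up, if_pos (by omega), hkey]
    group
end
end

section
/- The elements ỹ_1,…,ỹ_k satisfy ỹ_i T_j = T_j ỹ_i whenever i ∉ {j, j+1}, and ỹ_{i+1} = T_i ỹ_i T_i for 1 ≤ i ≤ k−1. -/
noncomputable section

variable {G : Type*} [Group G]

/-- `ỹ_i := T_{i↘1} · T_{1↗k} · y_k · T*_{k↘i}`. -/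
def ytilde (T y : ℕ → G) (k i : ℕ) : G :=
  down T i 1 * up T 1 k * y k * downStar T k i

lemma descProd_succ' (T : ℕ → G) (b n : ℕ) :
    descProd T b (n + 1) = descProd T (b + 1) n * T b := by
  induction n with
  | zero => simp [descProd]
  | succ n ih =>
      have h1 : descProd T b (n + 1 + 1) = T (b + (n + 1)) * descProd T b (n + 1) := rfl
      have h2 : descProd T (b + 1) (n + 1) = T (b + 1 + n) * descProd T (b + 1) n := rfl
      rw [h1, ih, h2, show b + 1 + n = b + (n + 1) by omega, mul_assoc]

lemma descProd_inv (T : ℕ → G) (b n : ℕ) :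
    descProd (fun m => (T m)⁻¹) b n = (ascProd T b n)⁻¹ := by
  induction n with
  | zero => simp [descProd, ascProd]
  | succ n ih =>
      show (T (b + n))⁻¹ * descProd (fun m => (T m)⁻¹) b n = (ascProd T b n * T (b + n))⁻¹
      rw [ih, mul_inv_rev]

section Aux

variable (k : ℕ) (T : ℕ → G)
variable (hcomm : ∀ i j, 1 ≤ i → i + 1 ≤ k → 1 ≤ j → j + 1 ≤ k →
      (i + 1 < j ∨ j + 1 < i) → T i * T j = T j * T i)
variable (hbraid : ∀ i, 1 ≤ i → i + 2 ≤ k →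
      T i * T (i + 1) * T i = T (i + 1) * T i * T (i + 1))

include hcomm in
lemma T_comm_asc (s : ℕ) (h2 : s + 1 ≤ k) :
    ∀ n, n + 1 < s → T s * ascProd T 1 n = ascProd T 1 n * T s := by
  intro n
  induction n with
  | zero => intro _; simp [ascProd]
  | succ n ih =>
      intro h3
      show T s * (ascProd T 1 n * T (1 + n)) = ascProd T 1 n * T (1 + n) * T s
      rw [← mul_assoc, ih (by omega), mul_assoc, mul_assoc,
        hcomm s (1 + n) (by omega) h2 (by omega) (by omega) (by omega)]

include hcomm in
lemma T_comm_desc (s : ℕ) (h2 : s + 1 ≤ k) :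
    ∀ n, n + 1 < s → T s * descProd T 1 n = descProd T 1 n * T s := by
  intro n
  induction n with
  | zero => intro _; simp [descProd]
  | succ n ih =>
      intro h3
      show T s * (T (1 + n) * descProd T 1 n) = T (1 + n) * descProd T 1 n * T s
      rw [← mul_assoc, hcomm s (1 + n) (by omega) h2 (by omega) (by omega) (by omega),
        mul_assoc, mul_assoc, ih (by omega)]

include hcomm hbraid in
lemma asc_shift : ∀ n j, 1 ≤ j → j + 1 ≤ n → n + 1 ≤ k →
    T (j + 1) * ascProd T 1 n = ascProd T 1 n * T j := by
  intro n
  induction n with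
  | zero => intro j h1 h2 h3; omega
  | succ n ih =>
      intro j h1 h2 h3
      show T (j + 1) * (ascProd T 1 n * T (1 + n)) = ascProd T 1 n * T (1 + n) * T j
      rcases Nat.lt_or_ge j n with hlt | hge
      · rw [← mul_assoc, ih j h1 (by omega) (by omega), mul_assoc, mul_assoc,
          hcomm j (1 + n) h1 (by omega) (by omega) (by omega) (by omega)]
      · have hj : j = n := by omega
        subst hj
        obtain ⟨m, rfl⟩ : ∃ m, j = m + 1 := ⟨j - 1, by omega⟩
        have hA : ascProd T 1 (m + 1) = ascProd T 1 m * T (m + 1) := by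
          show ascProd T 1 m * T (1 + m) = ascProd T 1 m * T (m + 1)
          rw [Nat.add_comm 1 m]
        have hC : T (m + 1 + 1) * ascProd T 1 m = ascProd T 1 m * T (m + 1 + 1) :=
          T_comm_asc k T hcomm (m + 1 + 1) (by omega) m (by omega)
        have hB : T (m + 1) * T (m + 1 + 1) * T (m + 1)
            = T (m + 1 + 1) * T (m + 1) * T (m + 1 + 1) :=
          hbraid (m + 1) (by omega) (by omega)
        rw [show (1 : ℕ) + (m + 1) = m + 1 + 1 by omega, hA]
        calc T (m + 1 + 1) * (ascProd T 1 m * T (m + 1) * T (m + 1 + 1))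
            = (T (m + 1 + 1) * ascProd T 1 m) * (T (m + 1) * T (m + 1 + 1)) := by
              group
          _ = ascProd T 1 m * (T (m + 1 + 1) * T (m + 1) * T (m + 1 + 1)) := by
              rw [hC]; group
          _ = ascProd T 1 m * (T (m + 1) * T (m + 1 + 1) * T (m + 1)) := by rw [hB]
          _ = ascProd T 1 m * T (m + 1) * T (m + 1 + 1) * T (m + 1) := by
              rw [mul_assoc, mul_assoc, mul_assoc]

include hcomm hbraid in
lemma desc_shift : ∀ n j, 1 ≤ j → j + 1 ≤ n → n + 1 ≤ k →
    T j * descProd T 1 n = descProd T 1 n * T (j + 1) := by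
  intro n
  induction n with
  | zero => intro j h1 h2 h3; omega
  | succ n ih =>
      intro j h1 h2 h3
      show T j * (T (1 + n) * descProd T 1 n) = T (1 + n) * descProd T 1 n * T (j + 1)
      rcases Nat.lt_or_ge j n with hlt | hge
      · rw [← mul_assoc, hcomm j (1 + n) h1 (by omega) (by omega) (by omega) (by omega),
          mul_assoc, mul_assoc, ih j h1 (by omega) (by omega)]
      · have hj : j = n := by omega
        subst hj
        obtain ⟨m, rfl⟩ : ∃ m, j = m + 1 := ⟨j - 1, by omega⟩
        have hD : descProd T 1 (m + 1) = T (m + 1) * descProd T 1 m := by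
          show T (1 + m) * descProd T 1 m = T (m + 1) * descProd T 1 m
          rw [Nat.add_comm 1 m]
        have hC : T (m + 1 + 1) * descProd T 1 m = descProd T 1 m * T (m + 1 + 1) :=
          T_comm_desc k T hcomm (m + 1 + 1) (by omega) m (by omega)
        have hB : T (m + 1) * T (m + 1 + 1) * T (m + 1)
            = T (m + 1 + 1) * T (m + 1) * T (m + 1 + 1) :=
          hbraid (m + 1) (by omega) (by omega)
        rw [show (1 : ℕ) + (m + 1) = m + 1 + 1 by omega, hD]
        calc T (m + 1) * (T (m + 1 + 1) * (T (m + 1) * descProd T 1 m))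
            = (T (m + 1) * T (m + 1 + 1) * T (m + 1)) * descProd T 1 m := by
              rw [mul_assoc, mul_assoc]
          _ = (T (m + 1 + 1) * T (m + 1) * T (m + 1 + 1)) * descProd T 1 m := by rw [hB]
          _ = T (m + 1 + 1) * T (m + 1) * (T (m + 1 + 1) * descProd T 1 m) := by
              rw [mul_assoc]
          _ = T (m + 1 + 1) * (T (m + 1) * descProd T 1 m) * T (m + 1 + 1) := by
              rw [hC, mul_assoc, mul_assoc, mul_assoc]

end Aux

lemma ytilde_rec (T y : ℕ → G) (k i : ℕ) (h1 : 1 ≤ i) (h2 : i + 1 ≤ k) :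
    ytilde T y k (i + 1) = T i * ytilde T y k i * T i := by
  have hd : down T (i + 1) 1 = T i * down T i 1 := by
    unfold down
    rw [if_pos (by omega : 1 ≤ i + 1), if_pos h1]
    obtain ⟨m, rfl⟩ : ∃ m, i = m + 1 := ⟨i - 1, by omega⟩
    show descProd T 1 (m + 1 + 1 - 1) = T (m + 1) * descProd T 1 (m + 1 - 1)
    rw [show m + 1 + 1 - 1 = m + 1 by omega, show m + 1 - 1 = m by omega]
    show T (1 + m) * descProd T 1 m = T (m + 1) * descProd T 1 m
    rw [Nat.add_comm 1 m]
  have hs : downStar T k (i + 1) = downStar T k i * T i := by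
    unfold downStar down
    rw [if_pos (by omega : i + 1 ≤ k), if_pos (by omega : i ≤ k)]
    rw [show k - i = k - (i + 1) + 1 by omega,
      descProd_succ' (fun m => (T m)⁻¹) i (k - (i + 1))]
    simp [mul_assoc]
  unfold ytilde
  rw [hd, hs]
  group

lemma ytilde_one (T y : ℕ → G) (k : ℕ) (hk : 1 ≤ k) :
    ytilde T y k 1 = ascProd T 1 (k - 1) * y k * (ascProd T 1 (k - 1))⁻¹ := by
  unfold ytilde downStar down up
  rw [if_pos le_rfl, if_pos hk, if_pos hk]
  simp [descProd, descProd_inv]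

lemma ytilde_one_comm (k : ℕ) (T y : ℕ → G)
    (hcomm : ∀ i j, 1 ≤ i → i + 1 ≤ k → 1 ≤ j → j + 1 ≤ k →
      (i + 1 < j ∨ j + 1 < i) → T i * T j = T j * T i)
    (hbraid : ∀ i, 1 ≤ i → i + 2 ≤ k →
      T i * T (i + 1) * T i = T (i + 1) * T i * T (i + 1))
    (hyT : ∀ i j, 1 ≤ i → i ≤ k → 1 ≤ j → j + 1 ≤ k → i ≠ j → i ≠ j + 1 →
      y i * T j = T j * y i)
    (j : ℕ) (h1 : 2 ≤ j) (h2 : j + 1 ≤ k) :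
    ytilde T y k 1 * T j = T j * ytilde T y k 1 := by
  obtain ⟨j', rfl⟩ : ∃ m, j = m + 1 := ⟨j - 1, by omega⟩
  rw [ytilde_one T y k (by omega)]
  set A := ascProd T 1 (k - 1) with hAdef
  have hA : T (j' + 1) * A = A * T j' :=
    asc_shift k T hcomm hbraid (k - 1) j' (by omega) (by omega) (by omega)
  have hA' : T j' * A⁻¹ = A⁻¹ * T (j' + 1) := by
    apply mul_left_cancel (a := A)
    rw [← mul_assoc, ← hA, mul_assoc, mul_inv_cancel, mul_one, ← mul_assoc,
      mul_inv_cancel, one_mul]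
  have hy' : y k * T j' = T j' * y k :=
    hyT k j' (by omega) le_rfl (by omega) (by omega) (by omega) (by omega)
  calc A * y k * A⁻¹ * T (j' + 1)
      = A * y k * (A⁻¹ * T (j' + 1)) := by rw [mul_assoc]
    _ = A * (y k * T j') * A⁻¹ := by rw [← hA']; group
    _ = (A * T j') * (y k * A⁻¹) := by rw [hy']; group
    _ = T (j' + 1) * (A * y k * A⁻¹) := by rw [← hA, mul_assoc, mul_assoc]

lemma ytilde_expand (T y : ℕ → G) (k : ℕ) :
    ∀ n, n + 1 ≤ k → ytilde T y k (n + 1)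
      = descProd T 1 n * ytilde T y k 1 * ascProd T 1 n := by
  intro n
  induction n with
  | zero => intro _; simp [descProd, ascProd]
  | succ n ih =>
      intro h
      rw [ytilde_rec T y k (n + 1) (by omega) h, ih (by omega)]
      show T (n + 1) * (descProd T 1 n * ytilde T y k 1 * ascProd T 1 n) * T (n + 1)
        = (T (1 + n) * descProd T 1 n) * ytilde T y k 1 * (ascProd T 1 n * T (1 + n))
      rw [Nat.add_comm 1 n]
      group

/-- In the surface braid group of the once-punctured torus on `k` strands, the elements
`ỹ_1,…,ỹ_k` satisfy `ỹ_i T_j = T_j ỹ_i` whenever `i ∉ {j, j+1}`, and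
`ỹ_{i+1} = T_i ỹ_i T_i` for `1 ≤ i ≤ k−1`. -/
theorem ytilde_hecke_relations (k : ℕ) (T y z : ℕ → G)
    (hbraid : ∀ i, 1 ≤ i → i + 2 ≤ k →
      T i * T (i + 1) * T i = T (i + 1) * T i * T (i + 1))
    (hcomm : ∀ i j, 1 ≤ i → i + 1 ≤ k → 1 ≤ j → j + 1 ≤ k →
      (i + 1 < j ∨ j + 1 < i) → T i * T j = T j * T i)
    (hyT : ∀ i j, 1 ≤ i → i ≤ k → 1 ≤ j → j + 1 ≤ k → i ≠ j → i ≠ j + 1 →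
      y i * T j = T j * y i)
    (hzT : ∀ i j, 1 ≤ i → i ≤ k → 1 ≤ j → j + 1 ≤ k → i ≠ j → i ≠ j + 1 →
      z i * T j = T j * z i)
    (hy : ∀ i, 1 ≤ i → i + 1 ≤ k → y (i + 1) = (T i)⁻¹ * y i * (T i)⁻¹)
    (hz : ∀ i, 1 ≤ i → i + 1 ≤ k → z (i + 1) = T i * z i * T i)
    (hyy : ∀ i j, 1 ≤ i → i ≤ k → 1 ≤ j → j ≤ k → y i * y j = y j * y i)
    (hzz : ∀ i j, 1 ≤ i → i ≤ k → 1 ≤ j → j ≤ k → z i * z j = z j * z i)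
    (hmix : 2 ≤ k → z 1 * T 1 * y 1 * (T 1)⁻¹ = (T 1)⁻¹ * y 1 * (T 1)⁻¹ * z 1) :
    (∀ i j, 1 ≤ i → i ≤ k → 1 ≤ j → j + 1 ≤ k → i ≠ j → i ≠ j + 1 →
      ytilde T y k i * T j = T j * ytilde T y k i) ∧
    (∀ i, 1 ≤ i → i + 1 ≤ k →
      ytilde T y k (i + 1) = T i * ytilde T y k i * T i) := by
  constructor
  · intro i j hi1 hik hj1 hjk hij hij1
    obtain ⟨m, rfl⟩ : ∃ m, i = m + 1 := ⟨i - 1, by omega⟩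
    rw [ytilde_expand T y k m (by omega)]
    set Y := ytilde T y k 1 with hY
    set D := descProd T 1 m with hD
    set A := ascProd T 1 m with hA
    rcases Nat.lt_or_ge (m + 1) j with hge | hlt
    · -- j ≥ m + 2
      have c1 : T j * D = D * T j := T_comm_desc k T hcomm j hjk m (by omega)
      have c2 : T j * A = A * T j := T_comm_asc k T hcomm j hjk m (by omega)
      have c3 : Y * T j = T j * Y :=
        ytilde_one_comm k T y hcomm hbraid hyT j (by omega) hjk
      calc D * Y * A * T j = D * Y * (A * T j) := by rw [mul_assoc]
        _ = D * (Y * T j) * A := by rw [← c2]; group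
        _ = (D * T j) * (Y * A) := by rw [c3]; group
        _ = T j * (D * Y * A) := by rw [← c1, mul_assoc, mul_assoc]
    · -- j + 1 ≤ m
      have hjm : j + 1 ≤ m := by omega
      have d1 : T j * D = D * T (j + 1) :=
        desc_shift k T hcomm hbraid m j hj1 hjm (by omega)
      have d2 : T (j + 1) * A = A * T j :=
        asc_shift k T hcomm hbraid m j hj1 hjm (by omega)
      have d3 : Y * T (j + 1) = T (j + 1) * Y :=
        ytilde_one_comm k T y hcomm hbraid hyT (j + 1) (by omega) (by omega)
      calc D * Y * A * T j = D * Y * (A * T j) := by rw [mul_assoc]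
        _ = D * (Y * T (j + 1)) * A := by rw [← d2]; group
        _ = (D * T (j + 1)) * (Y * A) := by rw [d3]; group
        _ = T j * (D * Y * A) := by rw [← d1, mul_assoc, mul_assoc]
  · intro i h1 h2
    exact ytilde_rec T y k i h1 h2
end
end

section
/- The set SL₂(ℤ)₊ of 2×2 integer matrices with determinant 1 and all four entries nonnegative is a submonoid of SL₂(ℤ) freely generated by N and S: every matrix A ∈ SL₂(ℤ)₊ can be written as a finite product of copies of N and S in exactly one way (the identity matrix corresponding to the empty product). -/
/-- The matrix `N = [[1,1],[0,1]]`. -/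
def Nmat : Matrix (Fin 2) (Fin 2) ℤ := !![1, 1; 0, 1]

/-- The matrix `S = [[1,0],[1,1]]`. -/
def Smat : Matrix (Fin 2) (Fin 2) ℤ := !![1, 0; 1, 1]

/-- Membership in `SL₂(ℤ)₊`: determinant one and all four entries nonnegative. -/
def SL2Pos (A : Matrix (Fin 2) (Fin 2) ℤ) : Prop := A.det = 1 ∧ ∀ i j, 0 ≤ A i j

lemma sl2pos_one : SL2Pos 1 := by
  refine ⟨by simp, ?_⟩
  intro i j
  fin_cases i <;> fin_cases j <;> simp [Matrix.one_apply]

lemma sl2pos_mul {A B : Matrix (Fin 2) (Fin 2) ℤ} (hA : SL2Pos A) (hB : SL2Pos B) :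
    SL2Pos (A * B) := by
  refine ⟨by rw [Matrix.det_mul, hA.1, hB.1, one_mul], ?_⟩
  intro i j
  rw [Matrix.mul_apply, Fin.sum_univ_two]
  exact add_nonneg (mul_nonneg (hA.2 _ _) (hB.2 _ _)) (mul_nonneg (hA.2 _ _) (hB.2 _ _))

lemma dichotomy {a b c d : ℤ} (hdet : a * d - b * c = 1) (ha : 0 ≤ a) (hb : 0 ≤ b)
    (hc : 0 ≤ c) (hd : 0 ≤ d) (hne : ¬(a = 1 ∧ b = 0 ∧ c = 0 ∧ d = 1)) :
    (c ≤ a ∧ d ≤ b) ∨ (a ≤ c ∧ b ≤ d) := by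
  rcases le_or_gt c a with h1 | h1
  · rcases le_or_gt d b with h2 | h2
    · exact Or.inl ⟨h1, h2⟩
    · -- c ≤ a, b < d; must also have a ≤ c (i.e. a = c) else contradiction
      right
      refine ⟨?_, le_of_lt h2⟩
      by_contra hca
      push_neg at hca
      -- a ≥ c + 1, d ≥ b + 1, so 1 = a*d - b*c ≥ b + c + 1
      have hbc : b + c ≤ 0 := by nlinarith
      have hb0 : b = 0 := by omega
      have hc0 : c = 0 := by omega
      rw [hb0, hc0] at hdet
      have had : a * d = 1 := by linarith
      have ha1 : a = 1 := Int.eq_one_of_mul_eq_one_right ha had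
      have hd1 : d = 1 := by rw [ha1] at had; omega
      exact hne ⟨ha1, hb0, hc0, hd1⟩
  · rcases le_or_gt b d with h2 | h2
    · exact Or.inr ⟨le_of_lt h1, h2⟩
    · exfalso; nlinarith

lemma Ninv_mul : (!![1, -1; 0, 1] : Matrix (Fin 2) (Fin 2) ℤ) * Nmat = 1 := by
  simp [Nmat, Matrix.mul_fin_two]
  norm_num [← Matrix.one_fin_two]

lemma Sinv_mul : (!![1, 0; -1, 1] : Matrix (Fin 2) (Fin 2) ℤ) * Smat = 1 := by
  simp [Smat, Matrix.mul_fin_two]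
  norm_num [← Matrix.one_fin_two]

lemma key : ∀ n : ℕ, ∀ A : Matrix (Fin 2) (Fin 2) ℤ, SL2Pos A →
    (A 0 0 + A 0 1 + A 1 0 + A 1 1).toNat ≤ n →
    ∃! w : List Bool, (w.map fun b => if b then Nmat else Smat).prod = A := by
  intro n
  induction n with
  | zero =>
    intro A hA hm
    exfalso
    have ha := hA.2 0 0; have hb := hA.2 0 1; have hc := hA.2 1 0; have hd := hA.2 1 1
    have hdet : A 0 0 * A 1 1 - A 0 1 * A 1 0 = 1 := by
      have := hA.1; rwa [Matrix.det_fin_two] at this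
    have h0 : A 0 0 = 0 ∧ A 0 1 = 0 ∧ A 1 0 = 0 ∧ A 1 1 = 0 := by omega
    obtain ⟨e1, e2, e3, e4⟩ := h0
    rw [e1, e2, e3, e4] at hdet
    norm_num at hdet
  | succ n ih =>
    intro A hA hm
    set a := A 0 0 with ha_def
    set b := A 0 1 with hb_def
    set c := A 1 0 with hc_def
    set d := A 1 1 with hd_def
    have ha := hA.2 0 0; have hb := hA.2 0 1; have hc := hA.2 1 0; have hd := hA.2 1 1
    rw [← ha_def] at ha; rw [← hb_def] at hb; rw [← hc_def] at hc; rw [← hd_def] at hd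
    have hdet : a * d - b * c = 1 := by
      have := hA.1; rwa [Matrix.det_fin_two] at this
    have hAeta : A = !![a, b; c, d] := Matrix.eta_fin_two A
    by_cases hone : A = 1
    · subst hone
      refine ⟨[], by simp, ?_⟩
      intro w hw
      cases w with
      | nil => rfl
      | cons hd' t =>
        exfalso
        simp only [List.map_cons, List.prod_cons] at hw
        have hT : SL2Pos ((t.map fun b => if b then Nmat else Smat).prod) := by
          clear hw
          induction t with
          | nil => simpa using sl2pos_one
          | cons x xs ihx =>
            simp only [List.map_cons, List.prod_cons]
            refine sl2pos_mul ?_ ihx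
            cases x <;>
              refine ⟨by simp [Nmat, Smat, Matrix.det_fin_two_of], ?_⟩ <;>
              intro i j <;> fin_cases i <;> fin_cases j <;> simp [Nmat, Smat]
        set T := (t.map fun b => if b then Nmat else Smat).prod with hT_def
        have hTeta : T = !![T 0 0, T 0 1; T 1 0, T 1 1] := Matrix.eta_fin_two T
        cases hd' with
        | true =>
          simp only [if_true] at hw
          rw [hTeta, Nmat, Matrix.mul_fin_two] at hw
          have h01 : (1 : Matrix (Fin 2) (Fin 2) ℤ) 0 1 = 0 := by simp [Matrix.one_apply]
          have h11 : (1 : Matrix (Fin 2) (Fin 2) ℤ) 1 1 = 1 := by simp [Matrix.one_apply]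
          rw [← hw] at h01 h11
          simp at h01 h11
          have := hT.2 0 1
          omega
        | false =>
          simp only [if_neg Bool.false_ne_true] at hw
          rw [hTeta, Smat, Matrix.mul_fin_two] at hw
          have h10 : (1 : Matrix (Fin 2) (Fin 2) ℤ) 1 0 = 0 := by simp [Matrix.one_apply]
          have h00 : (1 : Matrix (Fin 2) (Fin 2) ℤ) 0 0 = 1 := by simp [Matrix.one_apply]
          rw [← hw] at h10 h00
          simp at h10 h00
          have := hT.2 1 0
          omega
    · -- A ≠ 1
      have hne : ¬ (a = 1 ∧ b = 0 ∧ c = 0 ∧ d = 1) := by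
        intro ⟨h1, h2, h3, h4⟩
        apply hone
        rw [hAeta, h1, h2, h3, h4]
        norm_num [← Matrix.one_fin_two]
      rcases dichotomy hdet ha hb hc hd hne with ⟨h1, h2⟩ | ⟨h1, h2⟩
      · -- N case: A = N * A', A' = !![a-c, b-d; c, d]
        set A' : Matrix (Fin 2) (Fin 2) ℤ := !![a - c, b - d; c, d] with hA'_def
        have hA'pos : SL2Pos A' := by
          refine ⟨by rw [hA'_def]; rw [Matrix.det_fin_two_of]; ring_nf; linarith [hdet], ?_⟩
          intro i j; fin_cases i <;> fin_cases j <;> simp [hA'_def] <;> omega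
        have hNA' : Nmat * A' = A := by
          rw [hA'_def, Nmat, Matrix.mul_fin_two, hAeta]
          norm_num
        have hcd : 0 < c + d := by
          rcases lt_or_ge 0 (c + d) with h | h
          · exact h
          · exfalso
            have hc0 : c = 0 := by omega
            have hd0 : d = 0 := by omega
            rw [hc0, hd0] at hdet; omega
        have hm' : (A' 0 0 + A' 0 1 + A' 1 0 + A' 1 1).toNat ≤ n := by
          have : A' 0 0 = a - c ∧ A' 0 1 = b - d ∧ A' 1 0 = c ∧ A' 1 1 = d := by
            refine ⟨?_, ?_, ?_, ?_⟩ <;> simp [hA'_def]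
          obtain ⟨e1, e2, e3, e4⟩ := this
          rw [e1, e2, e3, e4]
          omega
        obtain ⟨w', hw', huniq'⟩ := ih A' hA'pos hm'
        refine ⟨true :: w', ?_, ?_⟩
        · simp only [List.map_cons, List.prod_cons, if_true]
          rw [hw', hNA']
        · intro w hw
          cases w with
          | nil =>
            exfalso; apply hone; simpa using hw.symm
          | cons x t =>
            simp only [List.map_cons, List.prod_cons] at hw
            have hT : SL2Pos ((t.map fun b => if b then Nmat else Smat).prod) := by
              clear hw
              induction t with
              | nil => simpa using sl2pos_one
              | cons y ys ihy =>
                simp only [List.map_cons, List.prod_cons]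
                refine sl2pos_mul ?_ ihy
                cases y <;>
                  refine ⟨by simp [Nmat, Smat, Matrix.det_fin_two_of], ?_⟩ <;>
                  intro i j <;> fin_cases i <;> fin_cases j <;> simp [Nmat, Smat]
            set T := (t.map fun b => if b then Nmat else Smat).prod with hT_def
            have hTeta : T = !![T 0 0, T 0 1; T 1 0, T 1 1] := Matrix.eta_fin_two T
            cases x with
            | false =>
              exfalso
              simp only [if_neg Bool.false_ne_true] at hw
              -- A = S * T : then a = T00, c = T00 + T10 ≥ a, so a ≤ c; b ≤ d similarly
              have hw2 : (!![T 0 0, T 0 1; T 0 0 + T 1 0, T 0 1 + T 1 1] :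
                  Matrix (Fin 2) (Fin 2) ℤ) = A := by
                rw [← hw, hTeta, Smat, Matrix.mul_fin_two]; norm_num [← hTeta]
              have e00 : T 0 0 = a := by rw [← hw2] at ha_def; simp [ha_def]
              have e01 : T 0 1 = b := by rw [← hw2] at hb_def; simp [hb_def]
              have e10 : T 0 0 + T 1 0 = c := by rw [← hw2] at hc_def; simp [hc_def]
              have e11 : T 0 1 + T 1 1 = d := by rw [← hw2] at hd_def; simp [hd_def]
              have t10 := hT.2 1 0
              have t11 := hT.2 1 1
              -- then a ≤ c and b ≤ d, combined with h1 h2 gives a = c, b = d, det = 0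
              have hac : a = c := by omega
              have hbd : b = d := by omega
              rw [hac, hbd] at hdet
              nlinarith
            | true =>
              simp only [if_true] at hw
              -- N * T = A = N * A' ⇒ T = A'
              have hTA' : T = A' := by
                have : (!![1, -1; 0, 1] : Matrix (Fin 2) (Fin 2) ℤ) * (Nmat * T)
                    = (!![1, -1; 0, 1] : Matrix (Fin 2) (Fin 2) ℤ) * (Nmat * A') := by
                  rw [hw, hNA']
                rwa [← mul_assoc, ← mul_assoc, Ninv_mul, one_mul, one_mul] at this
              have := huniq' t (hT_def.symm.trans hTA')
              rw [this]
      · -- S case: A = S * A', A' = !![a, b; c - a, d - b]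
        set A' : Matrix (Fin 2) (Fin 2) ℤ := !![a, b; c - a, d - b] with hA'_def
        have hA'pos : SL2Pos A' := by
          refine ⟨by rw [hA'_def]; rw [Matrix.det_fin_two_of]; ring_nf; linarith [hdet], ?_⟩
          intro i j; fin_cases i <;> fin_cases j <;> simp [hA'_def] <;> omega
        have hSA' : Smat * A' = A := by
          rw [hA'_def, Smat, Matrix.mul_fin_two, hAeta]
          norm_num
        have hab : 0 < a + b := by
          rcases lt_or_ge 0 (a + b) with h | h
          · exact h
          · exfalso
            have ha0 : a = 0 := by omega
            have hb0 : b = 0 := by omega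
            rw [ha0, hb0] at hdet; omega
        have hm' : (A' 0 0 + A' 0 1 + A' 1 0 + A' 1 1).toNat ≤ n := by
          have : A' 0 0 = a ∧ A' 0 1 = b ∧ A' 1 0 = c - a ∧ A' 1 1 = d - b := by
            refine ⟨?_, ?_, ?_, ?_⟩ <;> simp [hA'_def]
          obtain ⟨e1, e2, e3, e4⟩ := this
          rw [e1, e2, e3, e4]
          omega
        obtain ⟨w', hw', huniq'⟩ := ih A' hA'pos hm'
        refine ⟨false :: w', ?_, ?_⟩
        · simp only [List.map_cons, List.prod_cons, if_neg Bool.false_ne_true]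
          rw [hw', hSA']
        · intro w hw
          cases w with
          | nil =>
            exfalso; apply hone; simpa using hw.symm
          | cons x t =>
            simp only [List.map_cons, List.prod_cons] at hw
            have hT : SL2Pos ((t.map fun b => if b then Nmat else Smat).prod) := by
              clear hw
              induction t with
              | nil => simpa using sl2pos_one
              | cons y ys ihy =>
                simp only [List.map_cons, List.prod_cons]
                refine sl2pos_mul ?_ ihy
                cases y <;>
                  refine ⟨by simp [Nmat, Smat, Matrix.det_fin_two_of], ?_⟩ <;>
                  intro i j <;> fin_cases i <;> fin_cases j <;> simp [Nmat, Smat]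
            set T := (t.map fun b => if b then Nmat else Smat).prod with hT_def
            have hTeta : T = !![T 0 0, T 0 1; T 1 0, T 1 1] := Matrix.eta_fin_two T
            cases x with
            | true =>
              exfalso
              simp only [if_true] at hw
              have hw2 : (!![T 0 0 + T 1 0, T 0 1 + T 1 1; T 1 0, T 1 1] :
                  Matrix (Fin 2) (Fin 2) ℤ) = A := by
                rw [← hw, hTeta, Nmat, Matrix.mul_fin_two]; norm_num [← hTeta]
              have e00 : T 0 0 + T 1 0 = a := by rw [← hw2] at ha_def; simp [ha_def]
              have e01 : T 0 1 + T 1 1 = b := by rw [← hw2] at hb_def; simp [hb_def]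
              have e10 : T 1 0 = c := by rw [← hw2] at hc_def; simp [hc_def]
              have e11 : T 1 1 = d := by rw [← hw2] at hd_def; simp [hd_def]
              have t00 := hT.2 0 0
              have t01 := hT.2 0 1
              have hac : a = c := by omega
              have hbd : b = d := by omega
              rw [hac, hbd] at hdet
              nlinarith
            | false =>
              simp only [if_neg Bool.false_ne_true] at hw
              have hTA' : T = A' := by
                have : (!![1, 0; -1, 1] : Matrix (Fin 2) (Fin 2) ℤ) * (Smat * T)
                    = (!![1, 0; -1, 1] : Matrix (Fin 2) (Fin 2) ℤ) * (Smat * A') := by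
                  rw [hw, hSA']
                rwa [← mul_assoc, ← mul_assoc, Sinv_mul, one_mul, one_mul] at this
              have := huniq' t (hT_def.symm.trans hTA')
              rw [this]

/-- `SL₂(ℤ)₊` is a submonoid of `SL₂(ℤ)` freely generated by `N` and `S`:
it contains the identity, is closed under multiplication, and every element
is a product of copies of `N` and `S` in exactly one way. -/
theorem sl2_pos_free_monoid_on_N_S :
    SL2Pos 1 ∧
    (∀ A B, SL2Pos A → SL2Pos B → SL2Pos (A * B)) ∧
    (∀ A, SL2Pos A →
      ∃! w : List Bool, (w.map fun b => if b then Nmat else Smat).prod = A) := by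
  refine ⟨sl2pos_one, fun A B hA hB => sl2pos_mul hA hB, fun A hA => ?_⟩
  exact key (A 0 0 + A 0 1 + A 1 0 + A 1 1).toNat A hA le_rfl
end

section
/- Let i be the East step from (x_i, y_i) to (x_i+1, y_i) and j the North step from (x_j, y_j) to (x_j, y_j+1), with x_i < x_j; set a = x_j − x_i − 1 (the arm) and l = y_j − y_i (the leg). Then the following are equivalent: (1) a·n ≤ (l+1)·m and l·m < (a+1)·n (i.e. the defining condition a/(l+1) ≤ m/n < (a+1)/l of a dinv pair); (2) there exists ε₀ > 0 such that for every ε with 0 < ε < ε₀ some straight line in ℝ² of slope n/m − ε intersects both segments i and j. -/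
set_option maxHeartbeats 1600000 in
/-- Fix positive integers `m`, `n`. Let `i` be the East step from `(xi, yi)` to `(xi+1, yi)`
(the closed unit horizontal segment) and `j` the North step from `(xj, yj)` to `(xj, yj+1)`
(the closed unit vertical segment), with `xi < xj`. Set `a = xj − xi − 1` (the arm) and
`l = yj − yi` (the leg). Then the following are equivalent:
(1) `a·n ≤ (l+1)·m` and `l·m < (a+1)·n` (the defining condition `a/(l+1) ≤ m/n < (a+1)/l`
of a dinv pair);
(2) there exists `ε₀ > 0` such that for every `0 < ε < ε₀` some straight line of slope
`n/m − ε` (i.e. `y = (n/m − ε)·x + c` for some `c`) meets both segments. -/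
theorem dinv_pair_iff_line_of_slope_slightly_less
    (m n : ℕ) (hm : 0 < m) (hn : 0 < n) (xi yi xj yj : ℤ) (hx : xi < xj) :
    ((xj - xi - 1) * (n : ℤ) ≤ (yj - yi + 1) * (m : ℤ) ∧
      (yj - yi) * (m : ℤ) < (xj - xi) * (n : ℤ))
    ↔ ∃ ε₀ : ℝ, 0 < ε₀ ∧ ∀ ε : ℝ, 0 < ε → ε < ε₀ → ∃ c : ℝ,
        (∃ u : ℝ, 0 ≤ u ∧ u ≤ 1 ∧
          (yi : ℝ) = ((n : ℝ) / (m : ℝ) - ε) * ((xi : ℝ) + u) + c) ∧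
        (∃ w : ℝ, 0 ≤ w ∧ w ≤ 1 ∧
          (yj : ℝ) + w = ((n : ℝ) / (m : ℝ) - ε) * (xj : ℝ) + c) := by
  have hM : (0:ℝ) < (m:ℝ) := by exact_mod_cast hm
  have hN : (0:ℝ) < (n:ℝ) := by exact_mod_cast hn
  have hxZ : xi + 1 ≤ xj := hx
  have hD : (1:ℝ) ≤ (xj:ℝ) - (xi:ℝ) := by
    have : ((xi:ℝ) + 1) ≤ (xj:ℝ) := by exact_mod_cast hxZ
    linarith
  set D : ℝ := (xj:ℝ) - (xi:ℝ) with hDdef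
  set L : ℝ := (yj:ℝ) - (yi:ℝ) with hLdef
  constructor
  · rintro ⟨h1, h2⟩
    have h1' : (D - 1) * (n:ℝ) ≤ (L + 1) * (m:ℝ) := by
      rw [hDdef, hLdef]; exact_mod_cast h1
    have h2' : L * (m:ℝ) < D * (n:ℝ) := by
      rw [hDdef, hLdef]; exact_mod_cast h2
    have hMD : (0:ℝ) < (m:ℝ) * D := by positivity
    refine ⟨(D * n - L * m) / ((m:ℝ) * D), div_pos (by linarith) hMD, ?_⟩
    intro ε hε hε'
    set s : ℝ := (n:ℝ) / (m:ℝ) - ε with hsdef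
    have hs : s * m = n - ε * m := by rw [hsdef]; field_simp
    have hεMD : ε * ((m:ℝ) * D) < D * n - L * m := (lt_div_iff₀ hMD).mp hε'
    clear_value s
    -- L < s * D
    have hsD : L < s * D := by
      have h : L * m < s * D * m := by nlinarith
      nlinarith
    -- s * (D - 1) ≤ L + 1
    have hf1 : s * (D - 1) ≤ L + 1 := by
      have key : s * (D - 1) * m = ((n:ℝ) - ε * m) * (D - 1) := by
        rw [← hs]; ring
      have hnn : (0:ℝ) ≤ ε * m * (D - 1) := by
        apply mul_nonneg (by positivity); linarith
      have h : s * (D - 1) * m ≤ (L + 1) * m := by nlinarith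
      nlinarith
    by_cases hcase : s * D - L ≤ 1
    · refine ⟨(yi:ℝ) - s * xi, ⟨0, le_refl _, zero_le_one, by ring⟩,
        ⟨s * D - L, by linarith, hcase, ?_⟩⟩
      rw [hDdef, hLdef]; ring
    · push_neg at hcase
      have hspos : 0 < s := by linarith
      refine ⟨(yi:ℝ) - s * ((xi:ℝ) + (s * D - L - 1) / s),
        ⟨(s * D - L - 1) / s, div_nonneg (by linarith) hspos.le,
          (div_le_one hspos).mpr (by linarith), by ring⟩,
        ⟨1, zero_le_one, le_refl _, ?_⟩⟩
      have hsu : s * ((s * D - L - 1) / s) = s * D - L - 1 :=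
        mul_div_cancel₀ _ hspos.ne'
      rw [hDdef, hLdef] at hsu
      linear_combination hsu
  · rintro ⟨ε₀, hε₀, h⟩
    have hMD : (0:ℝ) < (m:ℝ) * D := by positivity
    set ε : ℝ := min (ε₀ / 2) (min ((n:ℝ) / (2 * m)) (1 / (2 * ((m:ℝ) * D)))) with hεdef
    have hεpos : 0 < ε := by
      apply lt_min (by linarith) (lt_min (by positivity) (by positivity))
    have hεlt : ε < ε₀ := lt_of_le_of_lt (min_le_left _ _) (by linarith)
    obtain ⟨c, ⟨u, hu0, hu1, heq1⟩, ⟨w, hw0, hw1, heq2⟩⟩ := h ε hεpos hεlt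
    set s : ℝ := (n:ℝ) / (m:ℝ) - ε with hsdef
    have hs : s * m = n - ε * m := by rw [hsdef]; field_simp
    have hε1 : ε ≤ (n:ℝ) / (2 * m) := le_trans (min_le_right _ _) (min_le_left _ _)
    have hε2 : ε ≤ 1 / (2 * ((m:ℝ) * D)) := le_trans (min_le_right _ _) (min_le_right _ _)
    have hεm : ε * m ≤ (n:ℝ) / 2 := by
      have key : (n:ℝ) / (2 * m) * m = (n:ℝ) / 2 := by field_simp
      linarith [mul_le_mul_of_nonneg_right hε1 hM.le]
    have hεmD : ε * ((m:ℝ) * D) ≤ 1 / 2 := by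
      have key : (1:ℝ) / (2 * ((m:ℝ) * D)) * ((m:ℝ) * D) = 1 / 2 := by
        field_simp
      linarith [mul_le_mul_of_nonneg_right hε2 hMD.le]
    have hkey : L + w = s * (D - u) := by
      rw [hDdef, hLdef]
      linear_combination heq2 - heq1
    have hkeym : (L + w) * m = ((n:ℝ) - ε * m) * (D - u) := by
      calc (L + w) * m = s * m * (D - u) := by rw [hkey]; ring
        _ = ((n:ℝ) - ε * m) * (D - u) := by rw [hs]
    have hsm : (0:ℝ) < (n:ℝ) - ε * m := by linarith
    clear_value ε s
    clear_value D L
    constructor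
    · by_contra hcon
      push_neg at hcon
      have hcon' : (yj - yi + 1) * (m:ℤ) + 1 ≤ (xj - xi - 1) * (n:ℤ) := hcon
      have hconR : (L + 1) * (m:ℝ) + 1 ≤ (D - 1) * (n:ℝ) := by
        rw [hDdef, hLdef]
        exact_mod_cast hcon'
      have h3 : ((n:ℝ) - ε * m) * (D - 1) ≤ ((n:ℝ) - ε * m) * (D - u) :=
        mul_le_mul_of_nonneg_left (by linarith) hsm.le
      have h4 : ε * (m:ℝ) ≤ ε * ((m:ℝ) * D) := by
        nlinarith [mul_nonneg (mul_nonneg hεpos.le hM.le)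
          (show (0:ℝ) ≤ D - 1 by linarith)]
      have h6 : w * (m:ℝ) ≤ 1 * (m:ℝ) := mul_le_mul_of_nonneg_right hw1 hM.le
      linarith [hkeym, h3, h4, h6, hεmD, hconR, mul_nonneg hεpos.le hM.le]
    · by_contra hcon
      push_neg at hcon
      have hconR : D * (n:ℝ) ≤ L * (m:ℝ) := by
        rw [hDdef, hLdef]
        exact_mod_cast hcon
      have h5 : (0:ℝ) ≤ ((n:ℝ) - ε * m) * u := mul_nonneg hsm.le hu0
      linarith [hkeym, h5, hconR, mul_nonneg hw0 hM.le, mul_pos hεpos hMD]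
end

section
/- For any two distinct lattice points P, Q ∈ ℤ² there exists ε₀ > 0 such that for every ε with 0 < ε < ε₀ the following are equivalent: (1) P attacks Q or Q attacks P with respect to ε; (2) some straight line in ℝ² of slope n/m − ε intersects both the North step at P and the North step at Q. (This is the geometric characterization of the attack relation used to identify maxtdinv of an (m,n)-Dyck path with the number of attacking pairs of North steps.) -/
/-- For `ε > 0` put `s_ε = n/m − ε`; the key of a lattice point `(x, y)` is `y − s_ε·x`. -/
noncomputable def keyEps (m n : ℕ) (ε : ℝ) (P : ℤ × ℤ) : ℝ :=
  (P.2 : ℝ) - ((n : ℝ) / (m : ℝ) - ε) * (P.1 : ℝ)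

/-- `P` attacks `Q` with respect to `ε`: `Q` occurs after `P` in the reading order but
before the lattice point directly above `P`. -/
def Attacks (m n : ℕ) (ε : ℝ) (P Q : ℤ × ℤ) : Prop :=
  keyEps m n ε P < keyEps m n ε Q ∧ keyEps m n ε Q < keyEps m n ε P + 1

/-- For any two distinct lattice points `P`, `Q` there is `ε₀ > 0` such that for all
`0 < ε < ε₀`: `P` attacks `Q` or `Q` attacks `P` (w.r.t. `ε`) if and only if some straight
line of slope `n/m − ε` meets both half-open North steps `{(x, y+u) : 0 ≤ u < 1}` at `P`
and at `Q`. -/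
theorem attack_iff_line_meets_both_north_steps
    (m n : ℕ) (hm : 0 < m) (hn : 0 < n) (P Q : ℤ × ℤ) (hPQ : P ≠ Q) :
    ∃ ε₀ : ℝ, 0 < ε₀ ∧ ∀ ε : ℝ, 0 < ε → ε < ε₀ →
      ((Attacks m n ε P Q ∨ Attacks m n ε Q P) ↔
        ∃ c : ℝ,
          (∃ u : ℝ, 0 ≤ u ∧ u < 1 ∧
            (P.2 : ℝ) + u = ((n : ℝ) / (m : ℝ) - ε) * (P.1 : ℝ) + c) ∧
          (∃ w : ℝ, 0 ≤ w ∧ w < 1 ∧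
            (Q.2 : ℝ) + w = ((n : ℝ) / (m : ℝ) - ε) * (Q.1 : ℝ) + c)) := by
  classical
  have main : ∀ ε : ℝ, keyEps m n ε P ≠ keyEps m n ε Q →
      ((Attacks m n ε P Q ∨ Attacks m n ε Q P) ↔
        ∃ c : ℝ,
          (∃ u : ℝ, 0 ≤ u ∧ u < 1 ∧
            (P.2 : ℝ) + u = ((n : ℝ) / (m : ℝ) - ε) * (P.1 : ℝ) + c) ∧
          (∃ w : ℝ, 0 ≤ w ∧ w < 1 ∧
            (Q.2 : ℝ) + w = ((n : ℝ) / (m : ℝ) - ε) * (Q.1 : ℝ) + c)) := by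
    intro ε hne
    constructor
    · rintro (⟨h1, h2⟩ | ⟨h1, h2⟩)
    -- case Attacks P Q
      · simp only [keyEps] at h1 h2
        refine ⟨keyEps m n ε Q,
          ⟨keyEps m n ε Q - keyEps m n ε P,
            by simp only [keyEps]; linarith, by simp only [keyEps]; linarith, ?_⟩,
          ⟨0, le_refl 0, one_pos, ?_⟩⟩
        · simp only [keyEps]; ring
        · simp only [keyEps]; ring
      · simp only [keyEps] at h1 h2
        refine ⟨keyEps m n ε P,
          ⟨0, le_refl 0, one_pos, ?_⟩,
          ⟨keyEps m n ε P - keyEps m n ε Q,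
            by simp only [keyEps]; linarith, by simp only [keyEps]; linarith, ?_⟩⟩
        · simp only [keyEps]; ring
        · simp only [keyEps]; ring
    · rintro ⟨c, ⟨u, hu0, hu1, hu⟩, ⟨w, hw0, hw1, hw⟩⟩
      have hcP : c = keyEps m n ε P + u := by simp only [keyEps]; linarith
      have hcQ : c = keyEps m n ε Q + w := by simp only [keyEps]; linarith
      rcases lt_or_gt_of_ne hne with h | h
      · exact Or.inl ⟨h, by linarith⟩
      · exact Or.inr ⟨h, by linarith⟩
  by_cases hx : P.1 = Q.1
  · have hy : P.2 ≠ Q.2 := fun h => hPQ (Prod.ext hx h)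
    refine ⟨1, one_pos, fun ε hε hε1 => main ε ?_⟩
    simp only [keyEps, hx]
    intro h
    apply hy
    exact_mod_cast (by linarith : (P.2 : ℝ) = (Q.2 : ℝ))
  · have hd : (P.1 : ℝ) - (Q.1 : ℝ) ≠ 0 := by
      intro h
      apply hx
      exact_mod_cast (by linarith : (P.1 : ℝ) = (Q.1 : ℝ))
    have hm' : (m : ℝ) ≠ 0 := Nat.cast_ne_zero.mpr hm.ne'
    set e : ℝ := (n : ℝ) / (m : ℝ) - ((P.2 : ℝ) - (Q.2 : ℝ)) / ((P.1 : ℝ) - (Q.1 : ℝ))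
      with hee
    refine ⟨if 0 < e then e else 1, ?_, fun ε hε hε1 => main ε ?_⟩
    · split
      · assumption
      · exact one_pos
    · have hεe : ε ≠ e := by
        by_cases he : 0 < e
        · rw [if_pos he] at hε1; exact ne_of_lt hε1
        · rw [if_neg he] at hε1
          intro h; rw [h] at hε; exact he hε
      have hdiff : keyEps m n ε P - keyEps m n ε Q =
          ((P.1 : ℝ) - (Q.1 : ℝ)) * (ε - e) := by
        simp only [keyEps, hee]
        field_simp
        ring
      intro h
      apply hεe
      have h0 : ((P.1 : ℝ) - (Q.1 : ℝ)) * (ε - e) = 0 := by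
        rw [← hdiff, h]; ring
      rcases mul_eq_zero.mp h0 with h' | h'
      · exact absurd h' hd
      · linarith
end
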